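/- arXiv:1201.3667 — 2 statements merged into one kernel-verified Lean document; each statement's English description precedes it below -/
import Mathlib

section
/- In LiP, authentic knowledge is derivable: for all agents a, b, message M, and community C, the formula sign(M,b) :_{a, C∪{b}} (b knows M) is a theorem of LiP. -/
/-- Messages over agent names: names, signing, pairing. -/
inductive Msg (A : Type) : Type
  | name : A → Msg A
  | sign : Msg A → A → Msg A
  | pair : Msg A → Msg A → Msg A

/-- Formulas of LiP: atomic propositions, individual-knowledge atoms,
negation, conjunction, and the interactive proof modality `M :_{a,C} φ`. -/
inductive Fm (A : Type) : Type
  | atom : ℕ → Fm A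
  | knows : A → Msg A → Fm A
  | neg : Fm A → Fm A
  | and : Fm A → Fm A → Fm A
  | proves : Msg A → A → Finset A → Fm A → Fm A

namespace Fm

variable {A : Type}

/-- Disjunction macro. -/
def or (φ ψ : Fm A) : Fm A := neg (and (neg φ) (neg ψ))
/-- Implication macro. -/
def impl (φ ψ : Fm A) : Fm A := or (neg φ) ψ
/-- Biimplication macro. -/
def iff (φ ψ : Fm A) : Fm A := and (impl φ ψ) (impl ψ φ)

/-- Boolean evaluation treating knowledge atoms and proof-modality formulas
as propositional atoms. -/
def eval (v : Fm A → Bool) : Fm A → Bool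
  | neg φ => !eval v φ
  | and φ ψ => eval v φ && eval v ψ
  | φ => v φ

/-- Classical propositional tautology (with `knows`- and `proves`-formulas as atoms). -/
def Taut (φ : Fm A) : Prop := ∀ v : Fm A → Bool, eval v φ = true

/-- The Hilbert system LiP. -/
inductive LiP [DecidableEq A] : Fm A → Prop
  | taut {φ : Fm A} : Taut φ → LiP φ
  | knowsSelf (a : A) : LiP (knows a (Msg.name a))
  | signSynth (a : A) (M : Msg A) :
      LiP (impl (knows a M) (knows a (Msg.sign M a)))
  | signAnal (a b : A) (M : Msg A) :
      LiP (impl (knows a (Msg.sign M b)) (knows a (Msg.pair M (Msg.name b))))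
  | pairing (a : A) (M M' : Msg A) :
      LiP (iff (and (knows a M) (knows a M')) (knows a (Msg.pair M M')))
  | GK (M M' : Msg A) (a : A) (C : Finset A) (φ φ' : Fm A) :
      LiP (impl (proves M a C (impl φ φ'))
        (impl (proves M' a C φ) (proves (Msg.pair M M') a C φ')))
  | truthful (M : Msg A) (a : A) (C : Finset A) (φ : Fm A) :
      LiP (impl (proves M a C φ) (impl (knows a M) φ))
  | peer (M : Msg A) (a : A) (C : Finset A) (φ : Fm A) {b : A}
      (hb : b ∈ C ∪ {a}) :
      LiP (impl (proves M a C φ)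
        (proves (Msg.sign M a) b (C ∪ {a}) (and (knows a M) (proves M a C φ))))
  | groupDecomp (M : Msg A) (a : A) (C C' : Finset A) (φ : Fm A) :
      LiP (impl (proves M a (C ∪ C') φ) (proves M a C φ))
  | mp {φ ψ : Fm A} : LiP (impl φ ψ) → LiP φ → LiP ψ
  | nec {φ : Fm A} (M : Msg A) (a : A) (C : Finset A) :
      LiP φ → LiP (proves M a C φ)
  | antiton {a : A} {M M' : Msg A} (C : Finset A) (φ : Fm A) :
      LiP (impl (knows a M) (knows a M')) →
      LiP (impl (proves M' a C φ) (proves M a C φ))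

end Fm

variable {A : Type} [DecidableEq A] [Fintype A] [Nonempty A]

open Fm Msg


section Helpers

variable {A : Type} [DecidableEq A]

open Fm Msg

lemma eval_impl (v : Fm A → Bool) (φ ψ : Fm A) :
    Fm.eval v (Fm.impl φ ψ) = (!Fm.eval v φ || Fm.eval v ψ) := by
  simp [Fm.impl, Fm.or, Fm.eval]

/-- and-elim-left as a LiP theorem. -/
lemma lip_and_left (φ ψ : Fm A) : LiP (impl (Fm.and φ ψ) φ) := by
  apply LiP.taut
  intro v
  simp [eval_impl, Fm.eval]
  cases h : Fm.eval v φ <;> simp [h]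

/-- iff-to-impl. -/
lemma lip_iff_mp {φ ψ : Fm A} (h : LiP (Fm.iff φ ψ)) : LiP (impl φ ψ) := by
  refine LiP.mp ?_ h
  apply LiP.taut
  intro v
  simp [Fm.iff, eval_impl, Fm.eval]
  cases h1 : Fm.eval v φ <;> cases h2 : Fm.eval v ψ <;> simp [h1, h2]

/-- transitivity of implication. -/
lemma lip_impl_trans {φ ψ χ : Fm A} (h1 : LiP (impl φ ψ)) (h2 : LiP (impl ψ χ)) :
    LiP (impl φ χ) := by
  refine LiP.mp (LiP.mp ?_ h1) h2
  apply LiP.taut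
  intro v
  simp [eval_impl]
  cases e1 : Fm.eval v φ <;> cases e2 : Fm.eval v ψ <;> cases e3 : Fm.eval v χ <;>
    simp [e1, e2, e3]

/-- duplication: φ → φ ∧ φ. -/
lemma lip_dup (φ : Fm A) : LiP (impl φ (Fm.and φ φ)) := by
  apply LiP.taut
  intro v
  simp [eval_impl, Fm.eval]

/-- a trivially true formula. -/
def lipTop : Fm A := impl (Fm.atom 0) (Fm.atom 0)

lemma lip_top : LiP (lipTop (A := A)) := by
  apply LiP.taut
  intro v
  simp [lipTop, eval_impl]

end Helpers

theorem lip_authentic_knowledge (a b : A) (M : Msg A) (C : Finset A) :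
    LiP (proves (Msg.sign M b) a (C ∪ {b}) (knows b M)) := by
  classical
  -- Step 1: M :_{b, C∪{a}} ⊤
  have h1 : LiP (proves M b (C ∪ {a}) (lipTop (A := A))) :=
    LiP.nec M b (C ∪ {a}) lip_top
  -- Step 2: peer review with a ∈ (C∪{a})∪{b}
  have ha : a ∈ (C ∪ {a}) ∪ {b} := by simp
  have h2 : LiP (proves (Msg.sign M b) a ((C ∪ {a}) ∪ {b})
      (Fm.and (knows b M) (proves M b (C ∪ {a}) (lipTop (A := A))))) :=
    LiP.mp (LiP.peer M b (C ∪ {a}) (lipTop (A := A)) ha) h1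
  set D : Finset A := (C ∪ {a}) ∪ {b} with hD
  set ψ : Fm A := Fm.and (knows b M) (proves M b (C ∪ {a}) (lipTop (A := A))) with hψ
  -- Step 3: weaken inside the modality via GK with a necessitated tautology
  have h3 : LiP (proves (Msg.sign M b) a D (impl ψ (knows b M))) :=
    LiP.nec _ a D (lip_and_left _ _)
  have h4 : LiP (proves (Msg.pair (Msg.sign M b) (Msg.sign M b)) a D (knows b M)) :=
    LiP.mp (LiP.mp (LiP.GK (Msg.sign M b) (Msg.sign M b) a D ψ (knows b M)) h3) h2
  -- Step 4: epistemic antitonicity: knows a (sign M b) → knows a (pair (sign M b) (sign M b))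
  have h5 : LiP (impl (knows a (Msg.sign M b))
      (knows a (Msg.pair (Msg.sign M b) (Msg.sign M b)))) :=
    lip_impl_trans (lip_dup _) (lip_iff_mp (LiP.pairing a (Msg.sign M b) (Msg.sign M b)))
  have h6 : LiP (proves (Msg.sign M b) a D (knows b M)) :=
    LiP.mp (LiP.antiton D (knows b M) h5) h4
  -- Step 5: group decomposition: D = (C ∪ {b}) ∪ {a}
  have hDeq : D = (C ∪ {b}) ∪ {a} := by
    ext x; simp [hD]; tauto
  rw [hDeq] at h6
  exact LiP.mp (LiP.groupDecomp (Msg.sign M b) a (C ∪ {b}) {a} (knows b M)) h6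
end

section
/- In LiP, modal idempotency is derivable: for all M, a, C, φ, the formula (M :_{a,C} (M :_{a,C} φ)) ↔ (M :_{a,C} φ) is a theorem of LiP. -/
namespace Fm

variable {A : Type} [DecidableEq A]

open Msg

section Taut

variable {φ ψ χ : Fm A}

lemma taut_syll (φ ψ χ : Fm A) :
    Taut (impl (impl φ ψ) (impl (impl ψ χ) (impl φ χ))) := by
  intro v; simp only [impl, or, eval]
  cases eval v φ <;> cases eval v ψ <;> cases eval v χ <;> simp

lemma taut_and_left (φ ψ : Fm A) : Taut (impl (and φ ψ) φ) := by
  intro v; simp only [impl, or, eval]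
  cases eval v φ <;> cases eval v ψ <;> simp

lemma taut_and_right (φ ψ : Fm A) : Taut (impl (and φ ψ) ψ) := by
  intro v; simp only [impl, or, eval]
  cases eval v φ <;> cases eval v ψ <;> simp

lemma taut_dup (φ : Fm A) : Taut (impl φ (and φ φ)) := by
  intro v; simp only [impl, or, eval]
  cases eval v φ <;> simp

lemma taut_swap (φ ψ χ : Fm A) :
    Taut (impl (impl φ (impl ψ χ)) (impl ψ (impl φ χ))) := by
  intro v; simp only [impl, or, eval]
  cases eval v φ <;> cases eval v ψ <;> cases eval v χ <;> simp

lemma taut_iff_intro (φ ψ : Fm A) :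
    Taut (impl (impl φ ψ) (impl (impl ψ φ) (Fm.iff φ ψ))) := by
  intro v; simp only [impl, or, Fm.iff, eval]
  cases eval v φ <;> cases eval v ψ <;> simp

lemma taut_iff_mp (φ ψ : Fm A) : Taut (impl (Fm.iff φ ψ) (impl φ ψ)) := by
  intro v; simp only [impl, or, Fm.iff, eval]
  cases eval v φ <;> cases eval v ψ <;> simp

lemma taut_iff_mpr (φ ψ : Fm A) : Taut (impl (Fm.iff φ ψ) (impl ψ φ)) := by
  intro v; simp only [impl, or, Fm.iff, eval]
  cases eval v φ <;> cases eval v ψ <;> simp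

lemma taut_self (φ : Fm A) : Taut (impl φ φ) := by
  intro v; simp only [impl, or, eval]
  cases eval v φ <;> simp

end Taut

/-- Hypothetical syllogism. -/
lemma LiP.syll {φ ψ χ : Fm A} (h1 : LiP (impl φ ψ)) (h2 : LiP (impl ψ χ)) :
    LiP (impl φ χ) :=
  LiP.mp (LiP.mp (LiP.taut (taut_syll φ ψ χ)) h1) h2

lemma LiP.iff_intro {φ ψ : Fm A} (h1 : LiP (impl φ ψ)) (h2 : LiP (impl ψ φ)) :
    LiP (Fm.iff φ ψ) :=
  LiP.mp (LiP.mp (LiP.taut (taut_iff_intro φ ψ)) h1) h2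

/-- Unsigning: `knows a (sign M a) → knows a M`. -/
lemma LiP.k_unsign (a : A) (M : Msg A) :
    LiP (impl (knows a (sign M a)) (knows a M)) := by
  have h1 := LiP.signAnal a a M (A := A)
  have h2 : LiP (impl (knows a (pair M (name a)))
      (and (knows a M) (knows a (name a)))) :=
    LiP.mp (LiP.taut (taut_iff_mpr _ _)) (LiP.pairing a M (name a))
  exact (h1.syll h2).syll (LiP.taut (taut_and_left _ _))

/-- `knows a M → knows a (pair M M)`. -/
lemma LiP.k_pairMM (a : A) (M : Msg A) :
    LiP (impl (knows a M) (knows a (pair M M))) := by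
  have h1 : LiP (impl (and (knows a M) (knows a M)) (knows a (pair M M))) :=
    LiP.mp (LiP.taut (taut_iff_mp _ _)) (LiP.pairing a M M)
  exact (LiP.taut (taut_dup _)).syll h1

/-- Collapse a paired self-proof term. -/
lemma LiP.collapse_pair {a : A} (M : Msg A) (C : Finset A) (φ : Fm A) :
    LiP (impl (proves (pair M M) a C φ) (proves M a C φ)) :=
  LiP.antiton C φ (LiP.k_pairMM a M)

/-- Internal modus ponens with a single proof term. -/
lemma LiP.provesMP {a : A} {M : Msg A} {C : Finset A} {φ ψ : Fm A}
    (h1 : LiP (proves M a C (impl φ ψ))) (h2 : LiP (proves M a C φ)) :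
    LiP (proves M a C ψ) :=
  LiP.mp (LiP.collapse_pair M C ψ)
    (LiP.mp (LiP.mp (LiP.GK M M a C φ ψ) h1) h2)

/-- Monotonicity (Kripke's law, single term). -/
lemma LiP.provesMono {φ ψ : Fm A} (a : A) (M : Msg A) (C : Finset A)
    (h : LiP (impl φ ψ)) :
    LiP (impl (proves M a C φ) (proves M a C ψ)) := by
  have h1 : LiP (impl (proves M a C φ) (proves (pair M M) a C ψ)) :=
    LiP.mp (LiP.GK M M a C φ ψ) (LiP.nec M a C h)
  exact h1.syll (LiP.collapse_pair M C ψ)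

lemma mem_union_self (a : A) (C : Finset A) : a ∈ C ∪ {a} :=
  Finset.mem_union_right _ (Finset.mem_singleton_self a)

/-- Simple peer review (b = a, collapsed back to term `M` and group `C`). -/
lemma LiP.selfPeer (a : A) (M : Msg A) (C : Finset A) (φ : Fm A) :
    LiP (impl (proves M a C φ)
      (proves M a C (and (knows a M) (proves M a C φ)))) := by
  have h1 := LiP.peer (A := A) M a C φ (mem_union_self a C)
  have h2 := LiP.groupDecomp (A := A) (sign M a) a C {a}
      (and (knows a M) (proves M a C φ))
  have h3 : LiP (impl (proves (sign M a) a C (and (knows a M) (proves M a C φ)))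
      (proves M a C (and (knows a M) (proves M a C φ)))) :=
    LiP.antiton C _ (LiP.signSynth a M)
  exact (h1.syll h2).syll h3

/-- Self-knowledge proof: `⊢ M :_{a,C} (knows a M)`. -/
lemma LiP.selfKnow (a : A) (M : Msg A) (C : Finset A) :
    LiP (proves M a C (knows a (M : Msg A))) := by
  have htop : LiP (proves M a C (impl (atom 0) (atom 0))) :=
    LiP.nec M a C (LiP.taut (taut_self (atom 0)))
  have h1 : LiP (proves M a C
      (and (knows a M) (proves M a C (impl (atom 0) (atom 0))))) :=
    LiP.mp (LiP.selfPeer a M C _) htop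
  exact LiP.mp (LiP.provesMono a M C (LiP.taut (taut_and_left _ _))) h1

/-- Self-proof of truthfulness: `⊢ M :_{a,C} ((M :_{a,C} φ) → φ)`. -/
lemma LiP.selfTruth (a : A) (M : Msg A) (C : Finset A) (φ : Fm A) :
    LiP (proves M a C (impl (proves M a C φ) φ)) := by
  have h1 : LiP (proves M a C
      (impl (proves M a C φ) (impl (knows a M) φ))) :=
    LiP.nec M a C (LiP.truthful M a C φ)
  have h2 : LiP (proves M a C
      (impl (knows a M) (impl (proves M a C φ) φ))) :=
    LiP.mp (LiP.provesMono a M C (LiP.taut (taut_swap _ _ _))) h1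
  exact LiP.provesMP h2 (LiP.selfKnow a M C)

end Fm

variable {A : Type} [DecidableEq A] [Fintype A] [Nonempty A]

open Fm Msg

theorem lip_modal_idempotency (a : A) (M : Msg A) (C : Finset A) (φ : Fm A) :
    LiP (Fm.iff (proves M a C (proves M a C φ)) (proves M a C φ)) := by
  set P := proves M a C φ with hP
  -- forward: M:(M:φ) → M:φ
  have fwd : LiP (impl (proves M a C P) P) := by
    have h1 : LiP (impl (proves M a C P) (proves (pair M M) a C φ)) :=
      LiP.mp (LiP.GK M M a C P φ) (LiP.selfTruth a M C φ)
    exact h1.syll (LiP.collapse_pair M C φ)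
  -- backward: M:φ → M:(M:φ)
  have bwd : LiP (impl P (proves M a C P)) := by
    have h1 : LiP (impl P (proves M a C (and (knows a M) P))) :=
      LiP.selfPeer a M C φ
    exact h1.syll (LiP.provesMono a M C (LiP.taut (taut_and_right _ _)))
  exact LiP.iff_intro fwd bwd
end
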